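/- Let μ be a fuzzy set of an MTL-algebra L. Then μ is an (∈̄,∈̄∨q̄)-fuzzy filter of L if and only if for every t ∈ (0.5, 1] the ∈-level set F(t) = {x ∈ L : μ(x) ≥ t} is either empty or a filter of L. -/

import Mathlib

/-- An MTL-algebra: a bounded lattice with `⊥ ≠ ⊤`, a product `odot` and residuum `rimp`,
where `odot` is associative, commutative and monotone in each argument, `⊤` is a unit,
the Galois correspondence holds and prelinearity holds. -/
class MTL (L : Type*) extends Lattice L, BoundedOrder L where
  odot : L → L → L
  rimp : L → L → L
  bot_ne_top : (⊥ : L) ≠ ⊤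
  odot_assoc : ∀ x y z : L, odot (odot x y) z = odot x (odot y z)
  odot_comm : ∀ x y : L, odot x y = odot y x
  odot_mono_left : ∀ x y z : L, x ≤ y → odot x z ≤ odot y z
  odot_mono_right : ∀ x y z : L, x ≤ y → odot z x ≤ odot z y
  odot_top : ∀ x : L, odot x ⊤ = x
  galois : ∀ x y z : L, odot x y ≤ z ↔ x ≤ rimp y z
  prelinear : ∀ x y : L, rimp x y ⊔ rimp y x = ⊤

open MTL

variable {L : Type*} [MTL L]

/-- A subset `A` is a filter: `1 ∈ A` and it is closed under modus ponens. -/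
def IsFilter' (A : Set L) : Prop :=
  (⊤ : L) ∈ A ∧ ∀ x y : L, x ∈ A → rimp x y ∈ A → y ∈ A

/-- An (∈̄,∈̄∨q̄)-fuzzy filter: `max(μ(1), 0.5) ≥ μ(x)` and
`max(μ(y), 0.5) ≥ min(μ(x → y), μ(x))`. -/
def IsBarFuzzyFilter (μ : L → ℝ) : Prop :=
  (∀ x : L, max (μ ⊤) (1/2) ≥ μ x) ∧
    ∀ x y : L, max (μ y) (1/2) ≥ min (μ (rimp x y)) (μ x)

/-! For a real `b ≤ 1`, `b ≤ max a (1/2)` says exactly that every threshold `t ∈ (1/2, 1]`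
reached by `b` is reached by `a`. Applied to the two defining inequalities of an
(∈̄,∈̄∨q̄)-fuzzy filter, this turns them into the two closure properties of the level sets
`{x | t ≤ μ x}`, and a nonempty set closed under modus ponens is a filter once it contains `⊤`. -/

theorem le_max_iff_forall_between {α : Type*} [LinearOrder α] {a b c d : α} (hbd : b ≤ d) :
    b ≤ max a c ↔ ∀ t, c < t → t ≤ d → t ≤ b → t ≤ a := by
  refine ⟨fun h t hct _ htb => (le_max_iff.1 (htb.trans h)).resolve_right (not_le.2 hct), ?_⟩
  intro h
  by_cases hbc : b ≤ c
  · exact le_max_of_le_right hbc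
  · exact le_max_of_le_left (h b (not_le.1 hbc) hbd le_rfl)

theorem eq_empty_or_isFilter'_iff {A : Set L} :
    A = ∅ ∨ IsFilter' A ↔ (∀ x ∈ A, ⊤ ∈ A) ∧ ∀ x y, x ∈ A → rimp x y ∈ A → y ∈ A := by
  rcases A.eq_empty_or_nonempty with rfl | ⟨a, ha⟩
  · simp
  · simp only [IsFilter', A.nonempty_iff_ne_empty.1 ⟨a, ha⟩, false_or]
    exact ⟨fun ⟨htop, hmp⟩ => ⟨fun _ _ => htop, hmp⟩, fun ⟨htop, hmp⟩ => ⟨htop a ha, hmp⟩⟩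

theorem stmt_3_general (μ : L → ℝ) (hμ1 : ∀ x : L, μ x ≤ 1) :
    IsBarFuzzyFilter μ ↔ (∀ t : ℝ, 1/2 < t → t ≤ 1 → ({x : L | t ≤ μ x} = ∅ ∨ IsFilter' {x : L | t ≤ μ x})) := by
  have hmin (x y : L) : min (μ (rimp x y)) (μ x) ≤ 1 := (min_le_right _ _).trans (hμ1 x)
  simp only [IsBarFuzzyFilter, ge_iff_le, le_max_iff_forall_between (hμ1 _),
    le_max_iff_forall_between (hmin _ _), le_min_iff, eq_empty_or_isFilter'_iff, Set.mem_ofPred_eq]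
  constructor
  · rintro ⟨htop, hmp⟩ t ht ht1
    exact ⟨fun x hx => htop x t ht ht1 hx, fun x y hx hxy => hmp x y t ht ht1 ⟨hxy, hx⟩⟩
  · intro h
    exact ⟨fun x t ht ht1 => (h t ht ht1).1 x, fun x y t ht ht1 hxy => (h t ht ht1).2 x y hxy.2 hxy.1⟩

theorem stmt_3 (μ : L → ℝ) (hμ0 : ∀ x : L, 0 ≤ μ x) (hμ1 : ∀ x : L, μ x ≤ 1) :
    IsBarFuzzyFilter μ ↔ (∀ t : ℝ, 1/2 < t → t ≤ 1 → ({x : L | t ≤ μ x} = ∅ ∨ IsFilter' {x : L | t ≤ μ x})) :=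
  stmt_3_general μ hμ1
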